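/- For binary X, Y with I(X ∧ Y) ≠ 0 and interactive random variables U^r satisfying conditions (P1)-(P2), if for a positive-probability realization u^r we have P(X=0|U^r=u^r)·P(X=1|U^r=u^r) > 0 and P(Y=0|U^r=u^r)·P(Y=1|U^r=u^r) > 0, then I(X ∧ Y | U^{r-1} = u^{r-1}) = 0. -/

import Mathlib

/-!
Let `j = r - 1` index the last message and `W = U^{r-1}`; say `U_j` is sent by terminal `X`.
Then `U_j - (X, W) - Y` and `X - (U_j, W) - Y`, and these Markov chains give
`P(x, y, w) P(u_j, w) = P(y, u_j, w) P(x, w)` after cancelling `P(x, u_j, w) > 0`, i.e.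
`P(Y = y | X = x, W = w) = P(Y = y | U^r = u^r)` for every `x`. So `X` and `Y` are
independent given `W = w`, and their mutual information there vanishes. A vanishing
conditional mutual information is turned into such a Markov factorization by the equality case
of Gibbs' inequality.
-/

open scoped Classical
open Finset Real

noncomputable section

variable {Ω : Type*} [Fintype Ω]

/-- Pushforward probability of value `x` under random variable `X` w.r.t. pmf `p`. -/
def dist' {α : Type*} (p : Ω → ℝ) (X : Ω → α) (x : α) : ℝ :=
  ∑ ω, if X ω = x then p ω else 0

/-- Shannon entropy, base 2. -/
def ent {α : Type*} [Fintype α] (p : Ω → ℝ) (X : Ω → α) : ℝ :=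
  -∑ x, dist' p X x * Real.logb 2 (dist' p X x)

/-- Conditional entropy `H(X | Y)`. -/
def condEnt {α β : Type*} [Fintype α] [Fintype β] (p : Ω → ℝ) (X : Ω → α) (Y : Ω → β) : ℝ :=
  ent p (fun ω => (X ω, Y ω)) - ent p Y

/-- Mutual information `I(X ∧ Y)`. -/
def mi {α β : Type*} [Fintype α] [Fintype β] (p : Ω → ℝ) (X : Ω → α) (Y : Ω → β) : ℝ :=
  ent p X + ent p Y - ent p (fun ω => (X ω, Y ω))

/-- Conditional mutual information `I(X ∧ Y | Z)`. -/
def cmi {α β γ : Type*} [Fintype α] [Fintype β] [Fintype γ]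
    (p : Ω → ℝ) (X : Ω → α) (Y : Ω → β) (Z : Ω → γ) : ℝ :=
  ent p (fun ω => (X ω, Z ω)) + ent p (fun ω => (Y ω, Z ω))
    - ent p (fun ω => ((X ω, Y ω), Z ω)) - ent p Z

/-- `p` is a probability mass function on `Ω`. -/
def IsPMF (p : Ω → ℝ) : Prop := (∀ ω, 0 ≤ p ω) ∧ ∑ ω, p ω = 1

/-- The prefix `U^i = (U_1, ..., U_i)` of an interactive sequence. -/
def pre {𝒰 : Type*} {r : ℕ} (U : Fin r → Ω → 𝒰) (i : ℕ) (h : i ≤ r) :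
    Ω → (Fin i → 𝒰) :=
  fun ω k => U (Fin.castLE h k) ω

/-- Condition (P1): interactive Markov conditions.  Index `j : Fin r` corresponds to the
`(j+1)`-st message; messages with odd 1-based index (`Even j.val`) are sent by terminal 𝒳. -/
def P1cond {𝒳 𝒴 𝒰 : Type*} [Fintype 𝒳] [Fintype 𝒴] [Fintype 𝒰] {r : ℕ}
    (p : Ω → ℝ) (X : Ω → 𝒳) (Y : Ω → 𝒴) (U : Fin r → Ω → 𝒰) : Prop :=
  ∀ j : Fin r,
    (Even j.val → cmi p (U j) Y (fun ω => (X ω, pre U j.val j.isLt.le ω)) = 0) ∧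
    (¬ Even j.val → cmi p (U j) X (fun ω => (Y ω, pre U j.val j.isLt.le ω)) = 0)

/-- Condition (P2): `X -∘- U^r -∘- Y`. -/
def P2cond {𝒳 𝒴 𝒰 : Type*} [Fintype 𝒳] [Fintype 𝒴] [Fintype 𝒰] {r : ℕ}
    (p : Ω → ℝ) (X : Ω → 𝒳) (Y : Ω → 𝒴) (U : Fin r → Ω → 𝒰) : Prop :=
  cmi p X Y (pre U r le_rfl) = 0

/-- The conditional pmf on `Ω` given the event `A = u`. -/
def condPMF {α : Type*} (p : Ω → ℝ) (A : Ω → α) (u : α) : Ω → ℝ :=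
  fun ω => if A ω = u then p ω / dist' p A u else 0

section Distribution

variable {α β γ : Type*} (p : Ω → ℝ)

lemma dist'_nonneg (hp : ∀ ω, 0 ≤ p ω) (Z : Ω → α) (z : α) : 0 ≤ dist' p Z z :=
  sum_nonneg fun ω _ => by split_ifs <;> simp [hp ω]

lemma dist'_congr {Z : Ω → α} {Z' : Ω → β} {z : α} {z' : β} (h : ∀ ω, Z ω = z ↔ Z' ω = z') :
    dist' p Z z = dist' p Z' z' :=
  sum_congr rfl fun ω _ => if_congr (h ω) rfl rfl

lemma dist'_le_dist'_comp (hp : ∀ ω, 0 ≤ p ω) (f : α → β) (Z : Ω → α) (z : α) :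
    dist' p Z z ≤ dist' p (fun ω => f (Z ω)) (f z) :=
  sum_le_sum fun ω _ => by
    by_cases h : Z ω = z
    · simp [h]
    · simp only [h, if_false]; split_ifs <;> simp [hp ω]

lemma dist'_comp_of_injective {f : α → β} (hf : Function.Injective f) (Z : Ω → α) (z : α) :
    dist' p (fun ω => f (Z ω)) (f z) = dist' p Z z :=
  dist'_congr p fun _ => hf.eq_iff

lemma sum_dist'_mul [Fintype α] (Z : Ω → α) (g : α → ℝ) :
    ∑ z, dist' p Z z * g z = ∑ ω, p ω * g (Z ω) := by
  simp only [dist', sum_mul, ite_mul, zero_mul]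
  rw [sum_comm]
  simp

lemma sum_dist' [Fintype α] (Z : Ω → α) : ∑ z, dist' p Z z = ∑ ω, p ω := by
  simpa using sum_dist'_mul p Z 1

lemma sum_dist'_pair_left [Fintype α] (A : Ω → α) (C : Ω → γ) (c : γ) :
    ∑ a, dist' p (fun ω => (A ω, C ω)) (a, c) = dist' p C c := by
  unfold dist'
  rw [sum_comm]
  refine sum_congr rfl fun ω _ => ?_
  simp [Prod.ext_iff, ite_and]

lemma dist'_condPMF (C : Ω → γ) (c : γ) (Z : Ω → α) (z : α) :
    dist' (condPMF p C c) Z z = dist' p (fun ω => (Z ω, C ω)) (z, c) / dist' p C c := by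
  simp only [dist', condPMF, sum_div, Prod.mk.injEq]
  refine sum_congr rfl fun ω _ => ?_
  by_cases h : Z ω = z <;> by_cases h' : C ω = c <;> simp [h, h']

end Distribution

section Entropy

variable {α β γ : Type*} [Fintype α] [Fintype β] [Fintype γ] (p : Ω → ℝ)

lemma ent_comp (f : α → β) (Z : Ω → α) :
    ent p (fun ω => f (Z ω)) = -∑ z, dist' p Z z * logb 2 (dist' p (fun ω => f (Z ω)) (f z)) := by
  rw [ent, sum_dist'_mul p (fun ω => f (Z ω)), sum_dist'_mul p Z]

lemma ent_comp_of_injective {f : α → β} (hf : Function.Injective f) (Z : Ω → α) :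
    ent p (fun ω => f (Z ω)) = ent p Z := by
  rw [ent_comp, ent]
  simp only [dist'_comp_of_injective p hf]

lemma mi_comm (X : Ω → α) (Y : Ω → β) : mi p X Y = mi p Y X := by
  have := ent_comp_of_injective p Prod.swap_injective fun ω => (X ω, Y ω)
  simp only [Prod.swap_prod_mk] at this
  rw [mi, mi, this, add_comm (ent p X)]

lemma cmi_comm (X : Ω → α) (Y : Ω → β) (C : Ω → γ) : cmi p X Y C = cmi p Y X C := by
  have := ent_comp_of_injective p (Prod.swap_injective.prodMap Function.injective_id)
    fun ω => ((X ω, Y ω), C ω)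
  simp only [Prod.map_apply, Prod.swap_prod_mk, id_eq] at this
  rw [cmi, cmi, this, add_comm (ent p fun ω => (X ω, C ω))]

end Entropy

open InformationTheory in
theorem eq_of_sum_mul_log_div_le_zero {ι : Type*} [Fintype ι] {T Q : ι → ℝ}
    (hT : ∀ i, 0 ≤ T i) (hQ : ∀ i, 0 ≤ Q i) (hsupp : ∀ i, Q i = 0 → T i = 0)
    (hsum : ∑ i, Q i ≤ ∑ i, T i) (h : ∑ i, T i * log (T i / Q i) ≤ 0) : T = Q := by
  have hkl : ∀ i, T i * log (T i / Q i) = Q i * klFun (T i / Q i) + (T i - Q i) := by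
    intro i
    rcases (hQ i).eq_or_lt with hq | hq
    · simp [← hq, hsupp i hq.symm]
    · rw [klFun_apply]
      field_simp
      ring
  have hterm : ∀ i, 0 ≤ Q i * klFun (T i / Q i) :=
    fun i => mul_nonneg (hQ i) (klFun_nonneg (div_nonneg (hT i) (hQ i)))
  have hzero : ∑ i, Q i * klFun (T i / Q i) = 0 := by
    refine le_antisymm ?_ (sum_nonneg fun i _ => hterm i)
    simp only [hkl, sum_add_distrib, sum_sub_distrib] at h
    linarith
  funext i
  have hi := (sum_eq_zero_iff_of_nonneg fun i _ => hterm i).1 hzero i (mem_univ i)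
  rcases (hQ i).eq_or_lt with hq | hq
  · rw [← hq, hsupp i hq.symm]
  · rw [mul_eq_zero, klFun_eq_zero_iff (div_nonneg (hT i) hq.le), div_eq_one_iff_eq hq.ne'] at hi
    exact hi.resolve_left hq.ne'

/-- `P(X, Y | W = w) = P(X | W = w) P(Y | W = w)` with denominators cleared, so it holds
trivially when `P(W = w) = 0`. -/
def CondIndepAt {α β γ : Type*} (p : Ω → ℝ) (X : Ω → α) (Y : Ω → β) (W : Ω → γ) (w : γ) :
    Prop :=
  ∀ x y, dist' p (fun ω => ((X ω, Y ω), W ω)) ((x, y), w) * dist' p W w =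
    dist' p (fun ω => (X ω, W ω)) (x, w) * dist' p (fun ω => (Y ω, W ω)) (y, w)

section Markov

variable {α β γ : Type*} (p : Ω → ℝ) (A : Ω → α) (B : Ω → β) (C : Ω → γ)

/-- The law `P_{A|C} P_{B|C} P_C` that `((A, B), C)` would have if `A - C - B` were Markov. -/
def markovDist (z : (α × β) × γ) : ℝ :=
  dist' p (fun ω => (A ω, C ω)) (z.1.1, z.2) * dist' p (fun ω => (B ω, C ω)) (z.1.2, z.2) /
    dist' p C z.2

lemma marginals_pos_of_dist'_pos (hp : ∀ ω, 0 ≤ p ω) {z : (α × β) × γ}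
    (hz : 0 < dist' p (fun ω => ((A ω, B ω), C ω)) z) :
    0 < dist' p (fun ω => (A ω, C ω)) (z.1.1, z.2) ∧
      0 < dist' p (fun ω => (B ω, C ω)) (z.1.2, z.2) ∧ 0 < dist' p C z.2 :=
  ⟨hz.trans_le (dist'_le_dist'_comp p hp (fun z : (α × β) × γ => (z.1.1, z.2)) _ z),
    hz.trans_le (dist'_le_dist'_comp p hp (fun z : (α × β) × γ => (z.1.2, z.2)) _ z),
    hz.trans_le (dist'_le_dist'_comp p hp Prod.snd _ z)⟩

variable [Fintype α] [Fintype β] [Fintype γ]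

lemma sum_markovDist : ∑ z, markovDist p A B C z = ∑ ω, p ω := by
  rw [← sum_dist' p C, Fintype.sum_prod_type, sum_comm]
  refine sum_congr rfl fun c _ => ?_
  simp only [markovDist, Fintype.sum_prod_type, ← sum_div, ← Fintype.sum_mul_sum,
    sum_dist'_pair_left]
  exact mul_self_div_self _

lemma cmi_eq_sum_mul_logb_div (hp : ∀ ω, 0 ≤ p ω) :
    cmi p A B C = ∑ z, dist' p (fun ω => ((A ω, B ω), C ω)) z *
      logb 2 (dist' p (fun ω => ((A ω, B ω), C ω)) z / markovDist p A B C z) := by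
  let Z := fun ω => ((A ω, B ω), C ω)
  let fAC := fun z : (α × β) × γ => (z.1.1, z.2)
  let fBC := fun z : (α × β) × γ => (z.1.2, z.2)
  rw [cmi, show ent p (fun ω => (A ω, C ω)) = _ from ent_comp p fAC Z,
    show ent p (fun ω => (B ω, C ω)) = _ from ent_comp p fBC Z,
    show ent p C = _ from ent_comp p Prod.snd Z, ent]
  simp only [sub_neg_eq_add, ← sum_sub_distrib, ← sum_add_distrib, ← sum_neg_distrib]
  refine sum_congr rfl fun z _ => ?_
  rcases (dist'_nonneg p hp Z z).eq_or_lt with hz | hz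
  · simp [Z, ← hz]
  obtain ⟨hAC, hBC, hC⟩ := marginals_pos_of_dist'_pos p A B C hp hz
  rw [markovDist, logb_div hz.ne' (by positivity), logb_div (by positivity) hC.ne',
    logb_mul hAC.ne' hBC.ne']
  ring

theorem condIndepAt_of_cmi_eq_zero (hp : ∀ ω, 0 ≤ p ω) (h : cmi p A B C = 0) (c : γ) :
    CondIndepAt p A B C c := by
  let Z := fun ω => ((A ω, B ω), C ω)
  have hlaw : dist' p Z = markovDist p A B C := by
    refine eq_of_sum_mul_log_div_le_zero (dist'_nonneg p hp Z)
      (fun z => div_nonneg (mul_nonneg (dist'_nonneg p hp _ _) (dist'_nonneg p hp _ _))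
        (dist'_nonneg p hp _ _))
      (fun z hQ => ?_) ((sum_markovDist p A B C).trans (sum_dist' p Z).symm).le ?_
    · refine ((dist'_nonneg p hp Z z).eq_or_lt.resolve_right fun hz => ?_).symm
      obtain ⟨hAC, hBC, hC⟩ := marginals_pos_of_dist'_pos p A B C hp hz
      exact (div_pos (mul_pos hAC hBC) hC).ne' hQ
    · rw [cmi_eq_sum_mul_logb_div p A B C hp] at h
      simp only [logb, ← mul_div_assoc, ← sum_div, div_eq_zero_iff,
        log_ne_zero_of_pos_of_ne_one two_pos one_lt_two.ne', or_false] at h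
      exact h.le
  intro a b
  rcases (dist'_nonneg p hp C c).eq_or_lt with hc | hc
  · have hAC : dist' p (fun ω => (A ω, C ω)) (a, c) ≤ dist' p C c :=
      dist'_le_dist'_comp p hp Prod.snd _ (a, c)
    rw [← hc, mul_zero, le_antisymm (hc ▸ hAC) (dist'_nonneg p hp _ _), zero_mul]
  · rw [congrFun hlaw, markovDist, div_mul_cancel₀ _ hc.ne']

end Markov

section Independence

variable {α β γ : Type*} (p : Ω → ℝ)

theorem mi_eq_zero_of_indep [Fintype α] [Fintype β] (X : Ω → α) (Y : Ω → β)
    (h : ∀ x y, dist' p (fun ω => (X ω, Y ω)) (x, y) = dist' p X x * dist' p Y y) :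
    mi p X Y = 0 := by
  rw [mi, show ent p X = _ from ent_comp p Prod.fst (fun ω => (X ω, Y ω)),
    show ent p Y = _ from ent_comp p Prod.snd (fun ω => (X ω, Y ω)), ent]
  simp only [← sum_neg_distrib, ← sum_add_distrib, ← sum_sub_distrib]
  refine sum_eq_zero fun z _ => ?_
  obtain ⟨x, y⟩ := z
  rw [h]
  rcases eq_or_ne (dist' p X x) 0 with hx | hx
  · simp [hx]
  rcases eq_or_ne (dist' p Y y) 0 with hy | hy
  · simp [hy]
  rw [logb_mul hx hy]
  ring

theorem CondIndepAt.mi_condPMF_eq_zero [Fintype α] [Fintype β] {X : Ω → α} {Y : Ω → β}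
    {W : Ω → γ} {w : γ} (h : CondIndepAt p X Y W w) : mi (condPMF p W w) X Y = 0 := by
  refine mi_eq_zero_of_indep _ X Y fun x y => ?_
  simp only [dist'_condPMF]
  rcases eq_or_ne (dist' p W w) 0 with hw | hw
  · simp [hw]
  field_simp
  linear_combination h x y

theorem CondIndepAt.of_last_message {ν μ : Type*} [Fintype α] (hp : ∀ ω, 0 ≤ p ω)
    {X : Ω → α} {Y : Ω → β} {V : Ω → ν} {W : Ω → μ} {C : Ω → γ} {v : ν} {w : μ} {c : γ}
    (hV : ∀ x, CondIndepAt p V Y (fun ω => (X ω, W ω)) (x, w))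
    (hC : CondIndepAt p X Y C c) (hCVW : ∀ ω, C ω = c ↔ V ω = v ∧ W ω = w)
    (hpos : ∀ x, 0 < dist' p (fun ω => (X ω, C ω)) (x, c)) :
    CondIndepAt p X Y W w := by
  have hF : ∀ x y, dist' p (fun ω => ((V ω, Y ω), (X ω, W ω))) ((v, y), (x, w)) =
      dist' p (fun ω => ((X ω, Y ω), C ω)) ((x, y), c) :=
    fun x y => dist'_congr p fun ω => by simp only [Prod.mk.injEq, hCVW]; tauto
  have hAX : ∀ x, dist' p (fun ω => (V ω, (X ω, W ω))) (v, (x, w)) =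
      dist' p (fun ω => (X ω, C ω)) (x, c) :=
    fun x => dist'_congr p fun ω => by simp only [Prod.mk.injEq, hCVW]; tauto
  have hH : ∀ x y, dist' p (fun ω => (Y ω, (X ω, W ω))) (y, (x, w)) =
      dist' p (fun ω => (X ω, (Y ω, W ω))) (x, (y, w)) :=
    fun x y => dist'_congr p fun ω => by simp only [Prod.mk.injEq]; tauto
  have hH' : ∀ x y, dist' p (fun ω => ((X ω, Y ω), W ω)) ((x, y), w) =
      dist' p (fun ω => (X ω, (Y ω, W ω))) (x, (y, w)) :=
    fun x y => dist'_congr p fun ω => by simp only [Prod.mk.injEq]; tauto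
  -- `P(Y = y | X = x, W = w) = P(Y = y | C = c)` does not depend on `x`
  have hYC : ∀ x y, dist' p (fun ω => (X ω, (Y ω, W ω))) (x, (y, w)) * dist' p C c =
      dist' p (fun ω => (Y ω, C ω)) (y, c) * dist' p (fun ω => (X ω, W ω)) (x, w) := by
    intro x y
    refine mul_left_cancel₀ (hpos x).ne' ?_
    have hVx := hV x v y
    rw [hF, hAX, hH] at hVx
    linear_combination dist' p (fun ω => (X ω, W ω)) (x, w) * hC x y - dist' p C c * hVx
  have hYW : ∀ y, dist' p (fun ω => (Y ω, W ω)) (y, w) * dist' p C c =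
      dist' p (fun ω => (Y ω, C ω)) (y, c) * dist' p W w := by
    intro y
    rw [← sum_dist'_pair_left p X (fun ω => (Y ω, W ω)), ← sum_dist'_pair_left p X W, sum_mul,
      mul_sum]
    exact sum_congr rfl fun x _ => hYC x y
  intro x y
  have hc : 0 < dist' p C c := (hpos x).trans_le (dist'_le_dist'_comp p hp Prod.snd _ (x, c))
  refine mul_right_cancel₀ hc.ne' ?_
  rw [hH']
  linear_combination dist' p W w * hYC x y - dist' p (fun ω => (X ω, W ω)) (x, w) * hYW y

theorem mi_condPMF_eq_zero_of_last_message {ν μ : Type*} [Fintype α] [Fintype β] [Fintype γ]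
    [Fintype ν] [Fintype μ] (hp : ∀ ω, 0 ≤ p ω)
    {X : Ω → α} {Y : Ω → β} {V : Ω → ν} {W : Ω → μ} {C : Ω → γ} {v : ν} {w : μ} {c : γ}
    (hV : cmi p V Y (fun ω => (X ω, W ω)) = 0) (hC : cmi p X Y C = 0)
    (hCVW : ∀ ω, C ω = c ↔ V ω = v ∧ W ω = w)
    (hpos : ∀ x, 0 < dist' p (fun ω => (X ω, C ω)) (x, c)) :
    mi (condPMF p W w) X Y = 0 :=
  (CondIndepAt.of_last_message p hp (fun x => condIndepAt_of_cmi_eq_zero p _ _ _ hp hV (x, w))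
    (condIndepAt_of_cmi_eq_zero p _ _ _ hp hC c) hCVW hpos).mi_condPMF_eq_zero p

lemma dist'_pair_pos_of_condPMF_mul_pos (hp : ∀ ω, 0 ≤ p ω) {X : Ω → Fin 2} {C : Ω → γ}
    {c : γ} (h : 0 < dist' (condPMF p C c) X 0 * dist' (condPMF p C c) X 1) :
    ∀ x, 0 < dist' p (fun ω => (X ω, C ω)) (x, c) := by
  rw [dist'_condPMF, dist'_condPMF] at h
  refine Fin.forall_fin_two.2 ⟨?_, ?_⟩ <;>
    refine (dist'_nonneg p hp _ _).lt_of_ne fun h0 => ?_ <;> simp [← h0] at h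

end Independence

lemma pre_eq_iff {Ω 𝒰 : Type*} {r : ℕ} (hr : 1 ≤ r) (U : Fin r → Ω → 𝒰) (u : Fin r → 𝒰)
    (ω : Ω) :
    pre U r le_rfl ω = u ↔ U ⟨r - 1, by omega⟩ ω = u ⟨r - 1, by omega⟩ ∧
      pre U (r - 1) (Nat.sub_le r 1) ω = fun k => u (Fin.castLE (Nat.sub_le r 1) k) := by
  simp only [pre, funext_iff]
  constructor
  · intro h
    exact ⟨by simpa using h ⟨r - 1, by omega⟩, fun k => by simpa using h (Fin.castLE _ k)⟩
  · rintro ⟨hlast, hinit⟩ k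
    by_cases hk : k.val < r - 1
    · simpa using hinit ⟨k, hk⟩
    · rw [show k = ⟨r - 1, by omega⟩ from Fin.ext (by change k.val = r - 1; omega)]
      simpa using hlast

theorem stmt14_general {Ω 𝒰 : Type*} [Fintype Ω] [Fintype 𝒰] {r : ℕ} (hr : 1 ≤ r)
    (p : Ω → ℝ) (hp : IsPMF p) (X : Ω → Fin 2) (Y : Ω → Fin 2) (U : Fin r → Ω → 𝒰)
    (h1 : P1cond p X Y U) (h2 : P2cond p X Y U)
    (u : Fin r → 𝒰)
    (hX : 0 < dist' (condPMF p (pre U r le_rfl) u) X 0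
            * dist' (condPMF p (pre U r le_rfl) u) X 1)
    (hY : 0 < dist' (condPMF p (pre U r le_rfl) u) Y 0
            * dist' (condPMF p (pre U r le_rfl) u) Y 1) :
    mi (condPMF p (pre U (r - 1) (Nat.sub_le r 1))
          (fun k => u (Fin.castLE (Nat.sub_le r 1) k))) X Y = 0 := by
  have hlast := pre_eq_iff hr U u
  rcases Nat.even_or_odd (r - 1) with hj | hj
  · exact mi_condPMF_eq_zero_of_last_message p hp.1 ((h1 ⟨r - 1, by omega⟩).1 hj) h2 hlast
      (dist'_pair_pos_of_condPMF_mul_pos p hp.1 hX)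
  · rw [mi_comm]
    exact mi_condPMF_eq_zero_of_last_message p hp.1
      ((h1 ⟨r - 1, by omega⟩).2 (Nat.not_even_iff_odd.2 hj)) ((cmi_comm p X Y _).symm.trans h2)
      hlast (dist'_pair_pos_of_condPMF_mul_pos p hp.1 hY)

/-- For binary `X, Y` with `I(X ∧ Y) ≠ 0` and interactive `U^r` satisfying (P1)-(P2):
if both `X` and `Y` remain strictly supported given `U^r = u^r`, then
`I(X ∧ Y | U^{r-1} = u^{r-1}) = 0`. -/
theorem stmt14 {Ω 𝒰 : Type*} [Fintype Ω] [Fintype 𝒰] {r : ℕ} (hr : 1 ≤ r)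
    (p : Ω → ℝ) (hp : IsPMF p) (X : Ω → Fin 2) (Y : Ω → Fin 2) (U : Fin r → Ω → 𝒰)
    (hI : mi p X Y ≠ 0)
    (h1 : P1cond p X Y U) (h2 : P2cond p X Y U)
    (u : Fin r → 𝒰) (hu : 0 < dist' p (pre U r le_rfl) u)
    (hX : 0 < dist' (condPMF p (pre U r le_rfl) u) X 0
            * dist' (condPMF p (pre U r le_rfl) u) X 1)
    (hY : 0 < dist' (condPMF p (pre U r le_rfl) u) Y 0
            * dist' (condPMF p (pre U r le_rfl) u) Y 1) :
    mi (condPMF p (pre U (r - 1) (Nat.sub_le r 1))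
          (fun k => u (Fin.castLE (Nat.sub_le r 1) k))) X Y = 0 :=
  stmt14_general hr p hp X Y U h1 h2 u hX hY
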